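/- arXiv:2312.08657 — 5 statements merged into one kernel-verified Lean document; each statement's English description precedes it below -/
import Mathlib

section
/- Let μ be the Haar probability measure on the compact group SO(3) and let κ > 0. Define Z = ∫_{SO(3)} exp(κ tr(A)) dμ(A), and for Λ0 ∈ SO(3) define the von Mises–Fisher density M_{Λ0}(A) = Z⁻¹ exp(κ (A·Λ0)). Then: (a) ∫_{SO(3)} M_{Λ0}(A) dμ(A) = 1 for every Λ0 ∈ SO(3); (b) there exists a constant c1 ∈ (0,1), independent of Λ0, such that for every Λ0 ∈ SO(3) the matrix-valued Bochner integral satisfies ∫_{SO(3)} M_{Λ0}(A) A dμ(A) = c1 Λ0 (consistency relation for the flux). -/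
/-!
Right translation by `Λ0` turns `exp (κ (A·Λ0))` into `exp (κ tr A)`, so (a) is a change of
variables and the flux equals `Z⁻¹ N Λ0` with `N = ∫ exp (κ tr A) A dμ`. Invariance under
conjugation makes `N` commute with every rotation, hence `N = (I / 3) 1` with
`I = ∫ tr A exp (κ tr A) dμ`, and `c1 = I / (3 Z)`. The three half turns about the coordinate
axes sum to `-1`, so `∫ A dμ = 0`; therefore `I = ∫ tr A (exp (κ tr A) - 1) dμ > 0`, the
integrand being nonnegative and `tr A` not almost surely `0`. Finally `I < 3 Z` because
`tr A ≤ 3` and `tr A` is not almost surely `3`, its mean being `0`.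
-/

open Matrix MeasureTheory

/-- `SO3 A` means `A` is a real 3×3 special orthogonal matrix. -/
def SO3 (A : Matrix (Fin 3) (Fin 3) ℝ) : Prop :=
  Aᵀ * A = 1 ∧ A.det = 1

/-- Borel-type σ-algebra on 3×3 real matrices (the product σ-algebra). -/
instance : MeasurableSpace (Matrix (Fin 3) (Fin 3) ℝ) := MeasurableSpace.pi

attribute [local instance] Matrix.normedAddCommGroup Matrix.normedSpace

instance : BorelSpace (Matrix (Fin 3) (Fin 3) ℝ) := Pi.borelSpace

local notation "Mat" => Matrix (Fin 3) (Fin 3) ℝ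

open Real

theorem SO3_iff_mem_specialUnitaryGroup {A : Mat} :
    SO3 A ↔ A ∈ specialUnitaryGroup (Fin 3) ℝ := by
  rw [mem_specialUnitaryGroup_iff, mem_unitaryGroup_iff', star_eq_conjTranspose,
    conjTranspose_eq_transpose_of_trivial]
  rfl

namespace SO3

variable {A B : Mat}

theorem mul (hA : SO3 A) (hB : SO3 B) : SO3 (A * B) :=
  SO3_iff_mem_specialUnitaryGroup.2 <|
    mul_mem (SO3_iff_mem_specialUnitaryGroup.1 hA) (SO3_iff_mem_specialUnitaryGroup.1 hB)

theorem pow (hA : SO3 A) (k : ℕ) : SO3 (A ^ k) :=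
  SO3_iff_mem_specialUnitaryGroup.2 <| pow_mem (SO3_iff_mem_specialUnitaryGroup.1 hA) k

theorem mem_unitaryGroup (hA : SO3 A) : A ∈ unitaryGroup (Fin 3) ℝ :=
  (SO3_iff_mem_specialUnitaryGroup.1 hA).1

theorem mul_transpose_self (hA : SO3 A) : A * Aᵀ = 1 :=
  mul_eq_one_comm.1 hA.1

theorem transpose (hA : SO3 A) : SO3 Aᵀ :=
  ⟨by rw [transpose_transpose, hA.mul_transpose_self], by rw [det_transpose, hA.2]⟩

theorem trace_le_three (hA : SO3 A) : trace A ≤ 3 := by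
  have h i : A i i ≤ 1 :=
    (le_abs_self _).trans (entry_norm_bound_of_unitary hA.mem_unitaryGroup i i)
  linarith [trace_fin_three A, h 0, h 1, h 2]

end SO3

theorem isCompact_setOf_SO3 : IsCompact {A : Mat | SO3 A} := by
  refine Metric.isCompact_of_isClosed_isBounded ?_ ?_
  · exact (isClosed_eq (continuous_id.matrix_transpose.matrix_mul continuous_id)
      continuous_const).inter (isClosed_eq continuous_id.matrix_det continuous_const)
  · exact (Metric.isBounded_closedBall (x := (0 : Mat)) (r := 1)).subset fun A hA => by
      simpa using entrywise_sup_norm_bound_of_unitary hA.mem_unitaryGroup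

def halfTurn (i : Fin 3) : Mat :=
  diagonal fun j => if j = i then 1 else -1

def axisCycle : Mat :=
  !![0, 1, 0; 0, 0, 1; 1, 0, 0]

theorem SO3_halfTurn (i : Fin 3) : SO3 (halfTurn i) := by
  refine ⟨?_, ?_⟩
  · rw [halfTurn, diagonal_transpose, diagonal_mul_diagonal, ← diagonal_one]
    congr 1; ext j; split_ifs <;> norm_num
  · fin_cases i <;> simp [halfTurn, det_diagonal, Fin.prod_univ_three]

theorem SO3_axisCycle : SO3 axisCycle := by
  refine ⟨?_, ?_⟩
  · ext i j
    fin_cases i <;> fin_cases j <;> simp [axisCycle, mul_apply, Fin.sum_univ_three, one_apply]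
  · simp [axisCycle, det_fin_three]

theorem one_add_sum_halfTurn : 1 + ∑ i, halfTurn i = 0 := by
  ext j k
  fin_cases j <;> fin_cases k <;> simp [halfTurn, Fin.sum_univ_three, one_apply]

theorem trace_halfTurn_mul (i : Fin 3) (B : Mat) :
    trace (halfTurn i * B) = 2 * B i i - trace B := by
  have h a :
      (if a = i then (1 : ℝ) else -1) * B a a = 2 * (if a = i then B a a else 0) - B a a := by
    split_ifs <;> ring
  simp only [trace, diag_apply, halfTurn, diagonal_mul, h, Finset.sum_sub_distrib, ← Finset.mul_sum,
    Finset.sum_ite_eq', Finset.mem_univ, if_true]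

theorem axisCycle_mul_apply (B : Mat) (a b : Fin 3) : (axisCycle * B) a b = B (a + 1) b := by
  fin_cases a <;> simp [axisCycle, mul_apply, Fin.sum_univ_three]

theorem mul_axisCycle_apply (B : Mat) (a b : Fin 3) : (B * axisCycle) a b = B a (b + 2) := by
  fin_cases b <;> simp [axisCycle, mul_apply, Fin.sum_univ_three]

theorem axisCycle_pow_mul_apply (j : Fin 3) (B : Mat) (a b : Fin 3) :
    (axisCycle ^ (j : ℕ) * B) a b = B (a + j) b := by
  fin_cases j
  · simp
  · simp [axisCycle_mul_apply]
  · simp [sq, mul_assoc, axisCycle_mul_apply, add_assoc]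

theorem eq_zero_of_forall_trace_mul_eq_zero {A : Mat}
    (h : ∀ i j : Fin 3, trace (halfTurn i * axisCycle ^ (j : ℕ) * A) = 0) : A = 0 := by
  have hdiag : ∀ B : Mat, (∀ i, trace (halfTurn i * B) = 0) → ∀ i, B i i = 0 := by
    intro B hB i
    have h2 : ∀ i, 2 * B i i = trace B := fun i => by linarith [hB i, trace_halfTurn_mul i B]
    linarith [h2 0, h2 1, h2 2, h2 i, trace_fin_three B]
  ext a b
  -- `axisCycle ^ (a - b)` moves the entry `(a, b)` of `A` onto the diagonal
  have := hdiag _ (fun i => by rw [← mul_assoc]; exact h i (a - b)) b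
  rwa [axisCycle_pow_mul_apply, add_sub_cancel] at this

theorem apply_eq_zero_of_commute_halfTurn {N : Mat} {i a b : Fin 3} (h : Commute (halfTurn i) N)
    (hab : ¬ (a = i ↔ b = i)) : N a b = 0 := by
  have := congrFun₂ h.eq a b
  simp only [halfTurn, diagonal_mul, mul_diagonal] at this
  split_ifs at this <;> first | tauto | linarith

theorem eq_trace_div_smul_one_of_commute {N : Mat} (hX : Commute (halfTurn 0) N)
    (hY : Commute (halfTurn 1) N) (hP : Commute axisCycle N) :
    N = (trace N / 3) • (1 : Mat) := by
  have hdiag : ∀ a, N (a + 1) (a + 1) = N a a := fun a => by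
    have := congrFun₂ hP.eq a (a + 1)
    rwa [axisCycle_mul_apply, mul_axisCycle_apply, add_assoc,
      show (1 + 2 : Fin 3) = 0 from rfl, add_zero] at this
  have h1 : N 1 1 = N 0 0 := hdiag 0
  have h2 : N 2 2 = N 1 1 := hdiag 1
  ext a b
  rw [Matrix.smul_apply, smul_eq_mul]
  rcases eq_or_ne a b with rfl | hab
  · have haa : N a a = N 0 0 := by fin_cases a <;> [rfl; exact h1; exact h2.trans h1]
    rw [one_apply_eq, trace_fin_three, haa]
    linarith
  · rw [one_apply_ne hab, mul_zero]
    fin_cases a <;> fin_cases b <;>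
      first
      | exact absurd rfl hab
      | exact apply_eq_zero_of_commute_halfTurn hX (by decide)
      | exact apply_eq_zero_of_commute_halfTurn hY (by decide)

theorem MeasureTheory.MeasurePreserving.integral_comp_of_aestronglyMeasurable
    {α β E : Type*} [MeasurableSpace α] [MeasurableSpace β] [NormedAddCommGroup E]
    [NormedSpace ℝ E] {μ : Measure α} {ν : Measure β} {f : α → β}
    (hf : MeasurePreserving f μ ν) {g : β → E} (hg : AEStronglyMeasurable g ν) :
    ∫ x, g (f x) ∂μ = ∫ y, g y ∂ν := by
  rw [← hf.map_eq] at hg ⊢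
  exact (integral_map hf.measurable.aemeasurable hg).symm

-- `Matrix` is a type synonym, so these instances of `m → n → ℝ` are not found automatically.
instance {m n : Type*} [Fintype m] [Fintype n] : ContinuousENorm (Matrix m n ℝ) :=
  inferInstanceAs (ContinuousENorm (m → n → ℝ))

instance {m n : Type*} [Fintype m] [Fintype n] : SecondCountableTopology (Matrix m n ℝ) :=
  inferInstanceAs (SecondCountableTopology (m → n → ℝ))

section MatrixIntegral

variable {α n : Type*} [MeasurableSpace α] {μ : Measure α} [Fintype n] {f : α → Matrix n n ℝ}

theorem integral_matrix_const_mul [DecidableEq n] (R : Matrix n n ℝ) (hf : Integrable f μ) :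
    ∫ x, R * f x ∂μ = R * ∫ x, f x ∂μ :=
  (LinearMap.mulLeft ℝ R).toContinuousLinearMap.integral_comp_comm hf

theorem integral_matrix_mul_const [DecidableEq n] (R : Matrix n n ℝ) (hf : Integrable f μ) :
    ∫ x, f x * R ∂μ = (∫ x, f x ∂μ) * R :=
  (LinearMap.mulRight ℝ R).toContinuousLinearMap.integral_comp_comm hf

theorem integral_trace (hf : Integrable f μ) :
    ∫ x, trace (f x) ∂μ = trace (∫ x, f x ∂μ) :=
  (traceLinearMap n ℝ ℝ).toContinuousLinearMap.integral_comp_comm hf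

end MatrixIntegral

section ExpMoments

variable {α : Type*} [MeasurableSpace α] {μ : Measure α}

theorem mul_exp_mul_sub_one_pos {κ t : ℝ} (hκ : 0 < κ) (ht : t ≠ 0) :
    0 < t * (exp (κ * t) - 1) := by
  rcases ht.lt_or_gt with ht | ht
  · exact mul_pos_of_neg_of_neg ht (sub_neg.2 (exp_lt_one_iff.2 (mul_neg_of_pos_of_neg hκ ht)))
  · exact mul_pos ht (sub_pos.2 (one_lt_exp_iff.2 (mul_pos hκ ht)))

theorem integral_mul_exp_pos {κ : ℝ} (hκ : 0 < κ) {t : α → ℝ} (ht : Integrable t μ)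
    (hte : Integrable (fun x => t x * exp (κ * t x)) μ) (hmean : ∫ x, t x ∂μ = 0)
    (hne : ¬ t =ᵐ[μ] 0) : 0 < ∫ x, t x * exp (κ * t x) ∂μ := by
  have hsupp : Function.support (fun x => t x * exp (κ * t x) - t x) = Function.support t := by
    ext x
    simp only [Function.mem_support, ← mul_sub_one]
    exact ⟨fun h ht => h (by rw [ht, zero_mul]), fun ht => (mul_exp_mul_sub_one_pos hκ ht).ne'⟩
  have hint : Integrable (fun x => t x * exp (κ * t x) - t x) μ := hte.sub ht
  have hpos : 0 < ∫ x, t x * exp (κ * t x) - t x ∂μ := by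
    rw [integral_pos_iff_support_of_nonneg _ hint, hsupp, pos_iff_ne_zero]
    · exact (Measure.measure_support_eq_zero_iff μ).not.2 hne
    · intro x
      rcases eq_or_ne (t x) 0 with h | h
      · simp [h]
      · simpa [mul_sub_one] using (mul_exp_mul_sub_one_pos hκ h).le
  rwa [integral_sub hte ht, hmean, sub_zero] at hpos

theorem integral_mul_lt_const_mul_integral {t w : α → ℝ} {c : ℝ} (hw : ∀ x, 0 < w x)
    (hwi : Integrable w μ) (htw : Integrable (fun x => t x * w x) μ) (hle : ∀ᵐ x ∂μ, t x ≤ c)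
    (hne : ¬ t =ᵐ[μ] fun _ => c) : ∫ x, t x * w x ∂μ < c * ∫ x, w x ∂μ := by
  have hnonneg : 0 ≤ᵐ[μ] fun x => (c - t x) * w x := by
    filter_upwards [hle] with x hx using mul_nonneg (sub_nonneg.2 hx) (hw x).le
  have hpos : 0 < ∫ x, (c - t x) * w x ∂μ := by
    refine lt_of_le_of_ne (integral_nonneg_of_ae hnonneg) fun h0 => hne ?_
    have hint : Integrable (fun x => (c - t x) * w x) μ :=
      ((hwi.const_mul c).sub htw).congr (Filter.Eventually.of_forall fun x => by
        simp only [Pi.sub_apply]; ring)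
    filter_upwards [(integral_eq_zero_iff_of_nonneg_ae hnonneg hint).1 h0.symm] with x hx
    have := (mul_eq_zero.1 hx).resolve_right (hw x).ne'
    linarith
  simp only [sub_mul] at hpos
  rwa [integral_sub (hwi.const_mul c) htw, integral_const_mul, sub_pos] at hpos

end ExpMoments

namespace SO3

variable {μ : Measure Mat} {E : Type*} [NormedAddCommGroup E]

theorem integral_comp_mul_left [NormedSpace ℝ E]
    (hleft : ∀ R : Mat, SO3 R → μ.map (fun A => R * A) = μ)
    {R : Mat} (hR : SO3 R) {g : Mat → E} (hg : AEStronglyMeasurable g μ) :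
    ∫ A, g (R * A) ∂μ = ∫ A, g A ∂μ :=
  MeasurePreserving.integral_comp_of_aestronglyMeasurable
    ⟨(continuous_const.matrix_mul continuous_id).measurable, hleft R hR⟩ hg

theorem integral_comp_mul_right [NormedSpace ℝ E]
    (hright : ∀ R : Mat, SO3 R → μ.map (fun A => A * R) = μ)
    {R : Mat} (hR : SO3 R) {g : Mat → E} (hg : AEStronglyMeasurable g μ) :
    ∫ A, g (A * R) ∂μ = ∫ A, g A ∂μ :=
  MeasurePreserving.integral_comp_of_aestronglyMeasurable
    ⟨(continuous_id.matrix_mul continuous_const).measurable, hright R hR⟩ hg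

theorem ae_comp_mul_left (hleft : ∀ R : Mat, SO3 R → μ.map (fun A => R * A) = μ)
    {R : Mat} (hR : SO3 R) {p : Mat → Prop} (hp : ∀ᵐ A ∂μ, p A) : ∀ᵐ A ∂μ, p (R * A) :=
  Measure.QuasiMeasurePreserving.ae
    (MeasurePreserving.quasiMeasurePreserving
      ⟨(continuous_const.matrix_mul continuous_id).measurable, hleft R hR⟩) hp

theorem integrable_of_continuous [IsFiniteMeasure μ] (hcarrier : ∀ᵐ A ∂μ, SO3 A) {g : Mat → E}
    (hg : Continuous g) : Integrable g μ := by
  rw [← Measure.restrict_eq_self_of_ae_mem hcarrier]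
  exact hg.continuousOn.integrableOn_compact isCompact_setOf_SO3

theorem integral_id_eq_zero [IsFiniteMeasure μ] (hcarrier : ∀ᵐ A ∂μ, SO3 A)
    (hleft : ∀ R : Mat, SO3 R → μ.map (fun A => R * A) = μ) : ∫ A, A ∂μ = 0 := by
  set M := ∫ A, A ∂μ
  have hinv : ∀ R, SO3 R → R * M = M := fun R hR =>
    calc R * M = ∫ A, R * A ∂μ :=
          (integral_matrix_const_mul R (integrable_of_continuous hcarrier continuous_id)).symm
      _ = M := integral_comp_mul_left hleft hR
          (aestronglyMeasurable_id : AEStronglyMeasurable (fun A : Mat => A) μ)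
  have h4 : (4 : ℝ) • M = 0 := by
    calc (4 : ℝ) • M = (1 + ∑ i, halfTurn i) * M := by
          simp only [add_mul, one_mul, Finset.sum_mul, hinv _ (SO3_halfTurn _),
            Finset.sum_const, Finset.card_univ, Fintype.card_fin]
          module
      _ = 0 := by rw [one_add_sum_halfTurn, zero_mul]
  exact (smul_eq_zero.1 h4).resolve_left (by norm_num)

theorem integral_trace_eq_zero [IsFiniteMeasure μ] (hcarrier : ∀ᵐ A ∂μ, SO3 A)
    (hleft : ∀ R : Mat, SO3 R → μ.map (fun A => R * A) = μ) : ∫ A, trace A ∂μ = 0 := by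
  rw [integral_trace (f := fun A => A) (integrable_of_continuous hcarrier continuous_id),
    integral_id_eq_zero hcarrier hleft, trace_zero]

theorem not_ae_trace_eq_zero [NeZero μ] (hcarrier : ∀ᵐ A ∂μ, SO3 A)
    (hleft : ∀ R : Mat, SO3 R → μ.map (fun A => R * A) = μ) : ¬ ∀ᵐ A ∂μ, trace A = 0 := by
  intro h0
  have hR : ∀ i j : Fin 3, SO3 (halfTurn i * axisCycle ^ (j : ℕ)) := fun i j =>
    (SO3_halfTurn i).mul (SO3_axisCycle.pow j)
  have hall : ∀ᵐ A ∂μ, ∀ i j : Fin 3, trace (halfTurn i * axisCycle ^ (j : ℕ) * A) = 0 :=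
    ae_all_iff.2 fun i => ae_all_iff.2 fun j => ae_comp_mul_left hleft (hR i j) h0
  obtain ⟨A, hA, hzero⟩ := (hcarrier.and hall).exists
  simpa [eq_zero_of_forall_trace_mul_eq_zero hzero] using hA.2

theorem commute_integral_exp_trace_smul [IsFiniteMeasure μ] (hcarrier : ∀ᵐ A ∂μ, SO3 A)
    (hleft : ∀ R : Mat, SO3 R → μ.map (fun A => R * A) = μ)
    (hright : ∀ R : Mat, SO3 R → μ.map (fun A => A * R) = μ) (κ : ℝ) {R : Mat} (hR : SO3 R) :
    Commute R (∫ A, exp (κ * trace A) • A ∂μ) := by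
  set g : Mat → Mat := fun A => exp (κ * trace A) • A
  have hg : Continuous g := by fun_prop
  have hconj : ∀ A, R * g A * Rᵀ = g (R * (A * Rᵀ)) := fun A => by
    simp only [g, ← mul_assoc, trace_mul_cycle R A Rᵀ, hR.1, one_mul, Matrix.mul_smul,
      Matrix.smul_mul]
  have hN : R * (∫ A, g A ∂μ) * Rᵀ = ∫ A, g A ∂μ :=
    calc R * (∫ A, g A ∂μ) * Rᵀ = ∫ A, R * g A * Rᵀ ∂μ := by
          rw [← integral_matrix_const_mul _ (integrable_of_continuous hcarrier hg),
            ← integral_matrix_mul_const _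
              (integrable_of_continuous hcarrier (continuous_const.matrix_mul hg))]
      _ = ∫ A, g (R * (A * Rᵀ)) ∂μ := by simp only [hconj]
      _ = ∫ A, g (R * A) ∂μ :=
          integral_comp_mul_right (g := fun A => g (R * A)) hright hR.transpose (by fun_prop)
      _ = ∫ A, g A ∂μ := integral_comp_mul_left hleft hR hg.aestronglyMeasurable
  calc R * ∫ A, g A ∂μ = R * (∫ A, g A ∂μ) * Rᵀ * R := by rw [mul_assoc _ Rᵀ, hR.1, mul_one]
    _ = (∫ A, g A ∂μ) * R := by rw [hN]

theorem integral_exp_trace_smul_eq [IsFiniteMeasure μ] (hcarrier : ∀ᵐ A ∂μ, SO3 A)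
    (hleft : ∀ R : Mat, SO3 R → μ.map (fun A => R * A) = μ)
    (hright : ∀ R : Mat, SO3 R → μ.map (fun A => A * R) = μ) (κ : ℝ) :
    ∫ A, exp (κ * trace A) • A ∂μ = ((∫ A, trace A * exp (κ * trace A) ∂μ) / 3) • (1 : Mat) := by
  have hcomm := fun {R} (hR : SO3 R) => commute_integral_exp_trace_smul hcarrier hleft hright κ hR
  conv_lhs => rw [eq_trace_div_smul_one_of_commute (hcomm (SO3_halfTurn 0))
    (hcomm (SO3_halfTurn 1)) (hcomm SO3_axisCycle)]
  rw [← integral_trace (integrable_of_continuous hcarrier (by fun_prop))]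
  simp only [trace_smul, smul_eq_mul, mul_comm]

theorem integral_trace_mul_exp_pos [IsProbabilityMeasure μ] (hcarrier : ∀ᵐ A ∂μ, SO3 A)
    (hleft : ∀ R : Mat, SO3 R → μ.map (fun A => R * A) = μ) {κ : ℝ} (hκ : 0 < κ) :
    0 < ∫ A, trace A * exp (κ * trace A) ∂μ :=
  integral_mul_exp_pos hκ (integrable_of_continuous hcarrier (by fun_prop))
    (integrable_of_continuous hcarrier (by fun_prop)) (integral_trace_eq_zero hcarrier hleft)
    (not_ae_trace_eq_zero hcarrier hleft)

theorem integral_trace_mul_exp_lt [IsProbabilityMeasure μ] (hcarrier : ∀ᵐ A ∂μ, SO3 A)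
    (hleft : ∀ R : Mat, SO3 R → μ.map (fun A => R * A) = μ) (κ : ℝ) :
    ∫ A, trace A * exp (κ * trace A) ∂μ < 3 * ∫ A, exp (κ * trace A) ∂μ := by
  refine integral_mul_lt_const_mul_integral (fun _ => exp_pos _)
    (integrable_of_continuous hcarrier (by fun_prop))
    (integrable_of_continuous hcarrier (by fun_prop))
    (hcarrier.mono fun A hA => hA.trace_le_three) fun h => ?_
  have := integral_trace_eq_zero hcarrier hleft
  simp [integral_congr_ae h] at this

theorem integral_exp_trace_mul_transpose_smul [IsFiniteMeasure μ] (hcarrier : ∀ᵐ A ∂μ, SO3 A)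
    (hright : ∀ R : Mat, SO3 R → μ.map (fun A => A * R) = μ) (κ : ℝ) {Λ : Mat} (hΛ : SO3 Λ) :
    ∫ A, exp (κ * trace (A * Λᵀ)) • A ∂μ = (∫ A, exp (κ * trace A) • A ∂μ) * Λ := by
  rw [← integral_matrix_mul_const _ (integrable_of_continuous hcarrier (by fun_prop)),
    ← integral_comp_mul_right hright hΛ (by fun_prop)]
  simp only [mul_assoc, hΛ.mul_transpose_self, mul_one, smul_mul]

end SO3

/-- let `μ` be the Haar probability measure on `SO(3)` (encoded as a
probability measure on 3×3 matrices, carried by `SO(3)` and invariant under left and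
right translations by elements of `SO(3)`), let `κ > 0`, and let
`Z = ∫ exp(κ tr A) dμ(A)`.  For `Λ0 ∈ SO(3)` set
`M_{Λ0}(A) = Z⁻¹ exp(κ (A·Λ0))` with `A·Λ0 = tr(A Λ0ᵀ)`.  Then
(a) each `M_{Λ0}` is a probability density for `μ`; and
(b) there is a constant `c1 ∈ (0,1)`, independent of `Λ0`, with
`∫ M_{Λ0}(A) A dμ(A) = c1 Λ0` for every `Λ0 ∈ SO(3)`. -/
theorem statement2 (μ : Measure (Matrix (Fin 3) (Fin 3) ℝ))
    [IsProbabilityMeasure μ]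
    (hcarrier : ∀ᵐ A ∂μ, SO3 A)
    (hleft : ∀ R : Matrix (Fin 3) (Fin 3) ℝ, SO3 R → μ.map (fun A => R * A) = μ)
    (hright : ∀ R : Matrix (Fin 3) (Fin 3) ℝ, SO3 R → μ.map (fun A => A * R) = μ)
    (κ : ℝ) (hκ : 0 < κ) :
    (∀ Λ0 : Matrix (Fin 3) (Fin 3) ℝ, SO3 Λ0 →
      ∫ A, (∫ B, Real.exp (κ * Matrix.trace B) ∂μ)⁻¹ *
        Real.exp (κ * Matrix.trace (A * Λ0ᵀ)) ∂μ = 1) ∧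
    (∃ c1 : ℝ, 0 < c1 ∧ c1 < 1 ∧
      ∀ Λ0 : Matrix (Fin 3) (Fin 3) ℝ, SO3 Λ0 →
        (∫ A, ((∫ B, Real.exp (κ * Matrix.trace B) ∂μ)⁻¹ *
          Real.exp (κ * Matrix.trace (A * Λ0ᵀ))) • A ∂μ) = c1 • Λ0) := by
  set Z := ∫ B, exp (κ * trace B) ∂μ
  set I := ∫ A, trace A * exp (κ * trace A) ∂μ
  have hZ : 0 < Z := integral_exp_pos (SO3.integrable_of_continuous hcarrier (by fun_prop))
  have hI : 0 < I := SO3.integral_trace_mul_exp_pos hcarrier hleft hκ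
  have hIZ : I < 3 * Z := SO3.integral_trace_mul_exp_lt hcarrier hleft κ
  refine ⟨fun Λ hΛ => ?_, I / (3 * Z), by positivity, (div_lt_one (by positivity)).2 hIZ,
    fun Λ hΛ => ?_⟩
  · rw [integral_const_mul, SO3.integral_comp_mul_right (g := fun A => exp (κ * trace A)) hright
      hΛ.transpose (by fun_prop), inv_mul_cancel₀ hZ.ne']
  · simp_rw [← smul_smul]
    rw [integral_smul, SO3.integral_exp_trace_mul_transpose_smul hcarrier hright κ hΛ,
      SO3.integral_exp_trace_smul_eq hcarrier hleft hright, smul_mul, one_mul, smul_smul]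
    congr 1
    ring
end

section
/- Let c > 0, Λ0 ∈ SO(3), and M a real 3×3 matrix. Define L(ε) = c Λ0 + ε M for ε ∈ ℝ. Suppose S : ℝ → ℝ^{3×3} is differentiable at 0 and satisfies, for all ε in a neighborhood of 0, that S(ε) is symmetric positive semidefinite and S(ε)·S(ε) = L(ε)ᵀ L(ε). Then S(0) = c·I, the map ε ↦ L(ε) (S(ε))⁻¹ is differentiable at ε = 0, and its derivative at 0 equals c⁻¹ · (1/2)(M − Λ0 Mᵀ Λ0) = c⁻¹ P_{T_{Λ0}}(M). (This is the first-variation formula d/dε|_{ε=0} Λ[f0 + ε f1] = (c1 ρ0)⁻¹ P_{T_{Λ0}}(λ[f1]) for the polar-decomposition orthogonal factor, with c = c1 ρ0 and M = λ[f1].) -/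
open Matrix

attribute [local instance] Matrix.normedAddCommGroup Matrix.normedSpace

/-!
Write `L ε = c Λ0 + ε M`. At `ε = 0`, `S(0)² = c² I` with `S(0)` positive semidefinite, so
`S(0) + c I` is invertible and `S(0) = c I`. Differentiating `S² = Lᵀ L` at `0` then gives
`2c S'(0) = c (Mᵀ Λ0 + Λ0ᵀ M)`. Matrix inversion is differentiable at invertible matrices
(it is `det⁻¹ • adjugate`), with derivative `-S⁻¹ S' S⁻¹`; hence `L S⁻¹` has derivative
`c⁻¹ (M - Λ0 S'(0))` at `0`, which equals `c⁻¹ · ½ (M - Λ0 Mᵀ Λ0)` because `Λ0 Λ0ᵀ = I`.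
-/

open Filter Topology

section MatrixCalculus

variable {𝕜 : Type*} [NontriviallyNormedField 𝕜] {l m n : Type*} [Fintype n]

theorem differentiableAt_matrix {A : 𝕜 → Matrix m n 𝕜} {x : 𝕜} :
    DifferentiableAt 𝕜 A x ↔ ∀ i j, DifferentiableAt 𝕜 (fun y => A y i j) x :=
  differentiableAt_pi.trans <| forall_congr' fun _ => differentiableAt_pi

theorem hasDerivAt_matrix {A : 𝕜 → Matrix m n 𝕜} {A' : Matrix m n 𝕜} {x : 𝕜} :
    HasDerivAt A A' x ↔ ∀ i j, HasDerivAt (fun y => A y i j) (A' i j) x :=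
  hasDerivAt_pi.trans <| forall_congr' fun _ => hasDerivAt_pi

variable [Fintype m]

theorem HasDerivAt.matrix_mul {A : 𝕜 → Matrix l m 𝕜} {B : 𝕜 → Matrix m n 𝕜}
    {A' : Matrix l m 𝕜} {B' : Matrix m n 𝕜} {x : 𝕜} (hA : HasDerivAt A A' x)
    (hB : HasDerivAt B B' x) :
    HasDerivAt (fun y => A y * B y) (A' * B x + A x * B') x := by
  refine hasDerivAt_matrix.2 fun i k => ?_
  simp only [Matrix.add_apply, mul_apply, ← Finset.sum_add_distrib]
  exact HasDerivAt.fun_sum fun j _ =>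
    (hasDerivAt_matrix.1 hA i j).mul (hasDerivAt_matrix.1 hB j k)

theorem HasDerivAt.matrix_transpose {A : 𝕜 → Matrix m n 𝕜} {A' : Matrix m n 𝕜} {x : 𝕜}
    (hA : HasDerivAt A A' x) : HasDerivAt (fun y => (A y)ᵀ) A'ᵀ x :=
  hasDerivAt_matrix.2 fun i j => hasDerivAt_matrix.1 hA j i

variable [DecidableEq n]

theorem DifferentiableAt.matrix_det {A : 𝕜 → Matrix n n 𝕜} {x : 𝕜}
    (hA : DifferentiableAt 𝕜 A x) : DifferentiableAt 𝕜 (fun y => (A y).det) x := by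
  simp only [det_apply]
  exact DifferentiableAt.fun_sum fun σ _ => (DifferentiableAt.fun_finsetProd fun i _ =>
    differentiableAt_matrix.1 hA (σ i) i).const_smul _

theorem DifferentiableAt.matrix_adjugate {A : 𝕜 → Matrix n n 𝕜} {x : 𝕜}
    (hA : DifferentiableAt 𝕜 A x) : DifferentiableAt 𝕜 (fun y => (A y).adjugate) x := by
  refine differentiableAt_matrix.2 fun i j => ?_
  simp only [adjugate_apply]
  refine DifferentiableAt.matrix_det (differentiableAt_matrix.2 fun k l => ?_)
  by_cases hk : k = j
  · subst hk; simp
  · simpa [updateRow_ne hk] using differentiableAt_matrix.1 hA k l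

theorem DifferentiableAt.matrix_inv {A : 𝕜 → Matrix n n 𝕜} {x : 𝕜}
    (hA : DifferentiableAt 𝕜 A x) (hdet : (A x).det ≠ 0) :
    DifferentiableAt 𝕜 (fun y => (A y)⁻¹) x := by
  simp only [inv_def, Ring.inverse_eq_inv]
  exact (hA.matrix_det.inv hdet).smul hA.matrix_adjugate

theorem HasDerivAt.matrix_inv {A : 𝕜 → Matrix n n 𝕜} {A' : Matrix n n 𝕜} {x : 𝕜}
    (hA : HasDerivAt A A' x) (hdet : (A x).det ≠ 0) :
    HasDerivAt (fun y => (A y)⁻¹) (-((A x)⁻¹ * A' * (A x)⁻¹)) x := by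
  obtain ⟨B', hB⟩ : ∃ B', HasDerivAt (fun y => (A y)⁻¹) B' x :=
    ⟨_, (hA.differentiableAt.matrix_inv hdet).hasDerivAt⟩
  have hone : (fun y => A y * (A y)⁻¹) =ᶠ[𝓝 x] fun _ => 1 :=
    (hA.differentiableAt.matrix_det.continuousAt.eventually_ne hdet).mono fun y hy =>
      mul_nonsing_inv _ (isUnit_iff_ne_zero.2 hy)
  have h : A' * (A x)⁻¹ + A x * B' = 0 :=
    ((hA.matrix_mul hB).congr_of_eventuallyEq hone.symm).unique (hasDerivAt_const x 1)
  have h' := congrArg ((A x)⁻¹ * ·) h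
  simp only [mul_add, ← mul_assoc, nonsing_inv_mul _ (isUnit_iff_ne_zero.2 hdet), one_mul,
    mul_zero] at h'
  rwa [neg_eq_of_add_eq_zero_right h']

end MatrixCalculus

theorem Matrix.PosSemidef.eq_smul_one_of_mul_self_eq {n : Type*} [Fintype n]
    [DecidableEq n] {S : Matrix n n ℝ} {c : ℝ} (hS : S.PosSemidef) (hc : 0 < c)
    (h : S * S = c ^ 2 • 1) : S = c • 1 := by
  have hpd : (S + c • 1).PosDef := PosDef.posSemidef_add hS (PosDef.one.smul hc)
  have hzero : (S + c • 1) * (S - c • 1) = 0 := by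
    rw [add_mul, mul_sub, mul_sub, h]
    simp only [smul_mul, Matrix.mul_smul, one_mul, mul_one, smul_smul]
    module
  exact sub_eq_zero.1 (hpd.isUnit.mul_right_eq_zero.1 hzero)

theorem Matrix.inv_smul_one {𝕜 n : Type*} [Field 𝕜] [Fintype n] [DecidableEq n] {c : 𝕜}
    (hc : c ≠ 0) : (c • (1 : Matrix n n 𝕜))⁻¹ = c⁻¹ • 1 :=
  inv_eq_left_inv <| by
    rw [smul_mul, Matrix.mul_smul, mul_one, smul_smul, inv_mul_cancel₀ hc, one_smul]

theorem Matrix.sub_mul_half_add_eq_of_mul_transpose_eq_one {n : Type*} [Fintype n]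
    [DecidableEq n] {Λ M : Matrix n n ℝ} (hΛ : Λ * Λᵀ = 1) :
    M - Λ * ((1 / 2 : ℝ) • (Mᵀ * Λ + Λᵀ * M)) = (1 / 2 : ℝ) • (M - Λ * Mᵀ * Λ) := by
  rw [Matrix.mul_smul, mul_add, ← mul_assoc, ← mul_assoc, hΛ, one_mul]
  module

/-- first variation of the polar-decomposition orthogonal factor.
Let `L ε = c Λ0 + ε M` and let `S ε` be symmetric positive semidefinite with
`S(ε)·S(ε) = L(ε)ᵀ L(ε)` near `ε = 0`, `S` differentiable at `0`.  Then `S 0 = c·I`,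
`ε ↦ L(ε) (S ε)⁻¹` is differentiable at `0`, and its derivative at `0` equals
`c⁻¹ P_{T_{Λ0}}(M) = c⁻¹ (1/2)(M − Λ0 Mᵀ Λ0)`. -/
theorem statement3 (c : ℝ) (hc : 0 < c) (Λ0 M : Matrix (Fin 3) (Fin 3) ℝ)
    (hΛ0 : SO3 Λ0) (S : ℝ → Matrix (Fin 3) (Fin 3) ℝ)
    (hSdiff : DifferentiableAt ℝ S 0)
    (hS : ∀ᶠ ε in nhds (0 : ℝ), (S ε).PosSemidef ∧
      S ε * S ε = (c • Λ0 + ε • M)ᵀ * (c • Λ0 + ε • M)) :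
    S 0 = c • (1 : Matrix (Fin 3) (Fin 3) ℝ) ∧
    DifferentiableAt ℝ (fun ε : ℝ => (c • Λ0 + ε • M) * (S ε)⁻¹) 0 ∧
    deriv (fun ε : ℝ => (c • Λ0 + ε • M) * (S ε)⁻¹) 0
      = c⁻¹ • ((1 / 2 : ℝ) • (M - Λ0 * Mᵀ * Λ0)) := by
  obtain ⟨hΛ0, -⟩ := hΛ0
  set L : ℝ → Matrix (Fin 3) (Fin 3) ℝ := fun ε => c • Λ0 + ε • M
  have hL : HasDerivAt L M 0 := by
    have h := ((hasDerivAt_id' (0 : ℝ)).smul_const M).const_add (c • Λ0)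
    rwa [one_smul] at h
  have hL0 : L 0 = c • Λ0 := by simp [L]
  have hsq : (fun ε => S ε * S ε) =ᶠ[𝓝 0] fun ε => (L ε)ᵀ * L ε := hS.mono fun _ h => h.2
  have hS0 : S 0 = c • 1 := by
    refine hS.self_of_nhds.1.eq_smul_one_of_mul_self_eq hc ?_
    rw [hsq.eq_of_nhds, hL0, transpose_smul, smul_mul, Matrix.mul_smul, hΛ0, smul_smul, sq]
  obtain ⟨D, hSD⟩ : ∃ D, HasDerivAt S D 0 := ⟨_, hSdiff.hasDerivAt⟩
  have hD : D = (1 / 2 : ℝ) • (Mᵀ * Λ0 + Λ0ᵀ * M) := by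
    have h := ((hSD.matrix_mul hSD).congr_of_eventuallyEq hsq.symm).unique
      (hL.matrix_transpose.matrix_mul hL)
    simp only [hS0, hL0, Matrix.mul_smul, smul_mul, mul_one, one_mul, transpose_smul] at h
    refine (smul_right_inj (mul_ne_zero two_ne_zero hc.ne')).1 ?_
    linear_combination (norm := module) h
  have hΛ := hL.matrix_mul (hSD.matrix_inv (by simp [hS0, hc.ne']))
  refine ⟨hS0, hΛ.differentiableAt, hΛ.deriv.trans ?_⟩
  rw [hS0, inv_smul_one hc.ne', hL0, hD,
    ← sub_mul_half_add_eq_of_mul_transpose_eq_one (mul_eq_one_comm.1 hΛ0)]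
  simp only [Matrix.mul_smul, smul_mul, mul_neg, mul_one, one_mul, smul_smul, smul_sub]
  match_scalars <;> field_simp
end

section
/- Let c2 ∈ ℝ, let ρ : ℝ × ℝ³ → ℝ be nowhere vanishing, let w : ℝ × ℝ³ → ℝ³ be any map, and let u1, u2, u3 : ℝ × ℝ³ → ℝ³ be differentiable maps. Suppose that at every point (t,x) and for every i ∈ {1,2,3} the transport equation ρ(t,x) (∂_t u_i(t,x) + c2 (u1(t,x) · ∇_x) u_i(t,x)) + w(t,x) × u_i(t,x) = 0 holds, where × is the cross product in ℝ³. Then for all i, j ∈ {1,2,3} the scalar function g_{ij}(t,x) = u_i(t,x) · u_j(t,x) satisfies the transport equation ∂_t g_{ij}(t,x) + c2 u1(t,x) · ∇_x g_{ij}(t,x) = 0 at every point (t,x). -/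
/-!
The transport operator `∂_t + c2 (u₁ · ∇_x)` is the derivative along the space-time direction
`(1, c2 u₁)`, so it obeys the Leibniz rule for the dot product. By the equation it acts on every
`u_i` as the map `a ↦ -ρ⁻¹ w × a`, which is skew-adjoint, hence it kills every `u_i · u_j`.
-/

open Matrix

theorem fderiv_dotProduct_apply {𝕜 E ι : Type*} [NontriviallyNormedField 𝕜]
    [NormedAddCommGroup E] [NormedSpace 𝕜 E] [Fintype ι] {f g : E → ι → 𝕜} {p : E}
    (hf : DifferentiableAt 𝕜 f p) (hg : DifferentiableAt 𝕜 g p) (v : E) :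
    fderiv 𝕜 (fun q => f q ⬝ᵥ g q) p v = fderiv 𝕜 f p v ⬝ᵥ g p + f p ⬝ᵥ fderiv 𝕜 g p v := by
  have hf' := differentiableAt_pi.1 hf
  have hg' := differentiableAt_pi.1 hg
  simp only [dotProduct]
  rw [fderiv_fun_sum (A := fun k q => f q k * g q k) fun k _ => (hf' k).mul (hg' k)]
  simp only [FunLike.coe_sum, Finset.sum_apply, ← Finset.sum_add_distrib,
    fderiv_fun_mul (hf' _) (hg' _), fderiv_apply hf, fderiv_apply hg]
  refine Finset.sum_congr rfl fun k _ => ?_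
  simp only [_root_.add_apply, _root_.smul_apply,
    ContinuousLinearMap.comp_apply, ContinuousLinearMap.proj_apply, smul_eq_mul]
  ring

theorem cross_dotProduct_add_dotProduct_cross {R : Type*} [CommRing R] (w a b : Fin 3 → R) :
    w ⨯₃ a ⬝ᵥ b + a ⬝ᵥ w ⨯₃ b = 0 := by
  rw [dotProduct_comm, triple_product_permutation, triple_product_permutation a,
    ← cross_anticomm, dotProduct_neg, neg_add_cancel]

/-- if each column field `u_i : ℝ × ℝ³ → ℝ³` satisfies the transport
equation `ρ (∂_t u_i + c2 (u1·∇_x) u_i) + w × u_i = 0` with `ρ` nowhere vanishing,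
then every inner product `g_{ij} = u_i · u_j` satisfies the scalar transport equation
`∂_t g_{ij} + c2 u1 · ∇_x g_{ij} = 0`.  Here the time/directional derivatives are
expressed through the Fréchet derivative on `ℝ × (Fin 3 → ℝ)`. -/
theorem statement6 (c2 : ℝ)
    (ρ : ℝ × (Fin 3 → ℝ) → ℝ) (hρ : ∀ p, ρ p ≠ 0)
    (w : ℝ × (Fin 3 → ℝ) → Fin 3 → ℝ)
    (u : Fin 3 → ℝ × (Fin 3 → ℝ) → Fin 3 → ℝ)
    (hu : ∀ i, Differentiable ℝ (u i))
    (heq : ∀ (i : Fin 3) (p : ℝ × (Fin 3 → ℝ)),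
      ρ p • (fderiv ℝ (u i) p (1, 0) + c2 • fderiv ℝ (u i) p (0, u 0 p))
        + crossProduct (w p) (u i p) = 0) :
    ∀ (i j : Fin 3) (p : ℝ × (Fin 3 → ℝ)),
      fderiv ℝ (fun q => u i q ⬝ᵥ u j q) p (1, 0)
        + c2 * fderiv ℝ (fun q => u i q ⬝ᵥ u j q) p (0, u 0 p) = 0 := by
  intro i j p
  have along {F : Type} [NormedAddCommGroup F] [NormedSpace ℝ F] (f : ℝ × (Fin 3 → ℝ) → F) :
      fderiv ℝ f p (1, 0) + c2 • fderiv ℝ f p (0, u 0 p) = fderiv ℝ f p (1, c2 • u 0 p) := by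
    rw [← map_smul, ← map_add, Prod.smul_mk, smul_zero, Prod.mk_add_mk, add_zero, zero_add]
  have transport k : fderiv ℝ (u k) p (1, c2 • u 0 p) = (-ρ p)⁻¹ • w p ⨯₃ u k p := by
    rw [← along, eq_inv_smul_iff₀ (neg_ne_zero.2 (hρ p)), neg_smul, neg_eq_iff_eq_neg,
      eq_neg_iff_add_eq_zero]
    exact heq k p
  calc _ = fderiv ℝ (fun q => u i q ⬝ᵥ u j q) p (1, c2 • u 0 p) := along _
    _ = (-ρ p)⁻¹ * (w p ⨯₃ u i p ⬝ᵥ u j p + u i p ⬝ᵥ w p ⨯₃ u j p) := by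
      rw [fderiv_dotProduct_apply (hu i p) (hu j p), transport, transport, smul_dotProduct,
        dotProduct_smul, smul_eq_mul, smul_eq_mul, mul_add]
    _ = 0 := by rw [cross_dotProduct_add_dotProduct_cross, mul_zero]
end

section
/- Let T > 0 and let v : ℝ × ℝ³ → ℝ³ be continuously differentiable with |(∇_x · v)(t,x)| ≤ C for all (t,x) ∈ [0,T] × ℝ³, for some constant C ≥ 0. Let f : ℝ × ℝ³ → ℝ be continuously differentiable, suppose there is a compact set K ⊂ ℝ³ with f(t,x) = 0 whenever t ∈ [0,T] and x ∉ K, and suppose ∂_t f(t,x) + v(t,x) · ∇_x f(t,x) = 0 for all (t,x) ∈ [0,T] × ℝ³. Then for every t ∈ [0,T], ∫_{ℝ³} f(t,x)² dx ≤ e^{C t} ∫_{ℝ³} f(0,x)² dx. In particular, if f(0,·) ≡ 0 then f(t,·) ≡ 0 for all t ∈ [0,T]. -/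
/-!
Multiply the equation by `2 f` and integrate in `x`. Since `2 f (v · ∇f) = v · ∇(f²)`, an
integration by parts (without boundary terms, `f (t, ·)` being compactly supported) turns
`d/dt ∫ f²` into `∫ f² (∇ · v)`, which is at most `C ∫ f²` in absolute value. Grönwall's
inequality then gives `∫ f(t)² ≤ e^{Ct} ∫ f(0)²`, and a continuous nonnegative compactly
supported function with vanishing integral is zero.
-/

open Matrix MeasureTheory Set

section Slices

variable {E G : Type*} [NormedAddCommGroup E] [NormedSpace ℝ E]
  [NormedAddCommGroup G] [NormedSpace ℝ G] {F : ℝ × E → G} {t : ℝ} {x : E}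

theorem DifferentiableAt.hasDerivAt_comp_prodMk_const (hF : DifferentiableAt ℝ F (t, x)) :
    HasDerivAt (fun s => F (s, x)) (fderiv ℝ F (t, x) (1, 0)) t :=
  hF.hasFDerivAt.comp_hasDerivAt t ((hasDerivAt_id t).prodMk (hasDerivAt_const t x))

theorem DifferentiableAt.fderiv_comp_const_prodMk (hF : DifferentiableAt ℝ F (t, x)) (w : E) :
    fderiv ℝ (fun y => F (t, y)) x w = fderiv ℝ F (t, x) (0, w) := by
  rw [show (fun y => F (t, y)) = F ∘ Prod.mk t from rfl,
    (hF.hasFDerivAt.comp x (hasFDerivAt_prodMk_right t x)).fderiv]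
  rfl

end Slices

theorem fderiv_fun_sq_apply {E : Type*} [NormedAddCommGroup E] [NormedSpace ℝ E] {φ : E → ℝ}
    {x : E} (hφ : DifferentiableAt ℝ φ x) (w : E) :
    fderiv ℝ (fun y => φ y ^ 2) x w = 2 * φ x * fderiv ℝ φ x w := by
  rw [fderiv_fun_pow 2 hφ]
  simp [mul_assoc]

section Divergence

variable {ι : Type*} [Fintype ι] [DecidableEq ι]

noncomputable def divergence (w : (ι → ℝ) → ι → ℝ) (x : ι → ℝ) : ℝ :=
  ∑ i, fderiv ℝ w x (Pi.single i 1) i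

theorem integral_sq_mul_divergence {φ : (ι → ℝ) → ℝ} {w : (ι → ℝ) → ι → ℝ}
    (hφ : ContDiff ℝ 1 φ) (hw : ContDiff ℝ 1 w) (hφc : HasCompactSupport φ) :
    ∫ x, φ x ^ 2 * divergence w x
      = -∫ x, 2 * φ x * (w x ⬝ᵥ fun i => fderiv ℝ φ x (Pi.single i 1)) := by
  have hφ2 : ContDiff ℝ 1 (fun x => φ x ^ 2) := hφ.pow 2
  have hφ2c : HasCompactSupport (fun x => φ x ^ 2) :=
    hφc.comp_left (g := (· ^ 2)) (zero_pow two_ne_zero)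
  have hwi (i : ι) : ContDiff ℝ 1 (fun x => w x i) := contDiff_pi.1 hw i
  have ibp (i : ι) : ∫ x, φ x ^ 2 * fderiv ℝ w x (Pi.single i 1) i
      = -∫ x, 2 * φ x * (w x i * fderiv ℝ φ x (Pi.single i 1)) := by
    have h := integral_mul_fderiv_eq_neg_fderiv_mul_of_integrable (μ := volume)
      (f := fun x => φ x ^ 2) (g := fun x => w x i) (v := Pi.single i 1)
      (Continuous.integrable_of_hasCompactSupport (by fun_prop)
        (hφ2c.fderiv_apply ℝ (Pi.single i 1)).mul_right)
      (Continuous.integrable_of_hasCompactSupport (by fun_prop) hφ2c.mul_right)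
      (Continuous.integrable_of_hasCompactSupport (by fun_prop) hφ2c.mul_right)
      (fun x _ => hφ2.differentiable one_ne_zero x)
      (fun x _ => (hwi i).differentiable one_ne_zero x)
    have hw' (x : ι → ℝ) : fderiv ℝ (fun x => w x i) x (Pi.single i 1)
        = fderiv ℝ w x (Pi.single i 1) i := by
      rw [fderiv_apply (hw.differentiable one_ne_zero x)]
      rfl
    have hφ' (x : ι → ℝ) : fderiv ℝ (fun x => φ x ^ 2) x (Pi.single i 1) * w x i
        = 2 * φ x * (w x i * fderiv ℝ φ x (Pi.single i 1)) := by
      rw [fderiv_fun_sq_apply (hφ.differentiable one_ne_zero x)]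
      ring
    simpa only [hw', hφ'] using h
  have hint₁ (i : ι) : Integrable fun x => φ x ^ 2 * fderiv ℝ w x (Pi.single i 1) i :=
    Continuous.integrable_of_hasCompactSupport (by fun_prop) hφ2c.mul_right
  have hint₂ (i : ι) : Integrable fun x => 2 * φ x * (w x i * fderiv ℝ φ x (Pi.single i 1)) :=
    Continuous.integrable_of_hasCompactSupport (by fun_prop)
      (hφc.mul_left (f := fun _ => (2 : ℝ))).mul_right
  simp only [divergence, Finset.mul_sum, dotProduct]
  rw [integral_finsetSum _ fun i _ => hint₁ i, integral_finsetSum _ fun i _ => hint₂ i,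
    ← Finset.sum_neg_distrib]
  exact Finset.sum_congr rfl fun i _ => ibp i

end Divergence

section ParametricIntegral

variable {E G : Type*} [NormedAddCommGroup E] [NormedSpace ℝ E] [MeasurableSpace E]
  [OpensMeasurableSpace E] [SecondCountableTopology E] [NormedAddCommGroup G] [NormedSpace ℝ G]

theorem hasDerivAt_setIntegral_of_contDiff {F : ℝ × E → G} (hF : ContDiff ℝ 1 F)
    {K : Set E} (hK : IsCompact K) (μ : Measure E) [IsFiniteMeasureOnCompacts μ] (t : ℝ) :
    HasDerivAt (fun s => ∫ x in K, F (s, x) ∂μ) (∫ x in K, fderiv ℝ F (t, x) (1, 0) ∂μ) t := by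
  have hF' : Continuous fun p => fderiv ℝ F p (1, 0) :=
    (hF.continuous_fderiv one_ne_zero).clm_apply continuous_const
  obtain ⟨M, hM⟩ := ((isCompact_closedBall t 1).prod hK).exists_bound_of_continuousOn
    hF'.continuousOn
  refine (hasDerivAt_integral_of_dominated_loc_of_deriv_le (Metric.ball_mem_nhds t one_pos)
    (F := fun s x => F (s, x)) (F' := fun s x => fderiv ℝ F (s, x) (1, 0)) (bound := fun _ => M)
    ?_ ?_ ?_ ?_ (integrableOn_const (μ := μ) hK.measure_lt_top.ne) ?_).2
  · exact .of_forall fun s => (hF.continuous.comp (Continuous.prodMk_right s)).aestronglyMeasurable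
  · exact (hF.continuous.comp (Continuous.prodMk_right t)).continuousOn.integrableOn_compact hK
  · exact (hF'.comp (Continuous.prodMk_right t)).aestronglyMeasurable
  · filter_upwards [ae_restrict_mem hK.measurableSet] with x hx s hs
    exact hM (s, x) ⟨Metric.ball_subset_closedBall hs, hx⟩
  · exact .of_forall fun x s _ =>
      (hF.differentiable one_ne_zero (s, x)).hasDerivAt_comp_prodMk_const

end ParametricIntegral

theorem abs_integral_mul_timeDeriv_le_of_transport {ι : Type*} [Fintype ι] [DecidableEq ι]
    {v : ℝ × (ι → ℝ) → ι → ℝ} {f : ℝ × (ι → ℝ) → ℝ} {C t : ℝ}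
    (hv : ContDiff ℝ 1 v) (hf : ContDiff ℝ 1 f)
    (hdiv : ∀ x, |∑ i, fderiv ℝ v (t, x) (0, Pi.single i 1) i| ≤ C)
    (hsupp : HasCompactSupport fun x => f (t, x))
    (hpde : ∀ x, fderiv ℝ f (t, x) (1, 0)
      + v (t, x) ⬝ᵥ (fun i => fderiv ℝ f (t, x) (0, Pi.single i 1)) = 0) :
    |∫ x, 2 * f (t, x) * fderiv ℝ f (t, x) (1, 0)| ≤ C * ∫ x, f (t, x) ^ 2 := by
  have hslice : ContDiff ℝ 1 fun x : ι → ℝ => (t, x) := contDiff_const.prodMk contDiff_id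
  have hφ : ContDiff ℝ 1 fun x => f (t, x) := hf.comp hslice
  have hw : ContDiff ℝ 1 fun x => v (t, x) := hv.comp hslice
  have hgrad (x : ι → ℝ) : (fun i => fderiv ℝ f (t, x) (0, Pi.single i 1))
      = fun i => fderiv ℝ (fun y => f (t, y)) x (Pi.single i 1) := by
    simp only [(hf.differentiable one_ne_zero (t, x)).fderiv_comp_const_prodMk]
  have hdivw (x : ι → ℝ) :
      divergence (fun y => v (t, y)) x = ∑ i, fderiv ℝ v (t, x) (0, Pi.single i 1) i := by
    simp only [divergence, (hv.differentiable one_ne_zero (t, x)).fderiv_comp_const_prodMk]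
  have henergy : ∫ x, 2 * f (t, x) * fderiv ℝ f (t, x) (1, 0)
      = ∫ x, f (t, x) ^ 2 * divergence (fun y => v (t, y)) x := by
    rw [integral_sq_mul_divergence hφ hw hsupp, ← integral_neg]
    congr 1 with x
    rw [← hgrad, eq_neg_of_add_eq_zero_left (hpde x)]
    ring
  have hφ2c : HasCompactSupport fun x => f (t, x) ^ 2 :=
    hsupp.comp_left (g := (· ^ 2)) (zero_pow two_ne_zero)
  rw [henergy, ← integral_const_mul, ← Real.norm_eq_abs]
  refine norm_integral_le_of_norm_le
    (Continuous.integrable_of_hasCompactSupport (by fun_prop) hφ2c.mul_left) (.of_forall fun x => ?_)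
  rw [norm_mul, hdivw, Real.norm_of_nonneg (sq_nonneg _), Real.norm_eq_abs, mul_comm]
  exact mul_le_mul_of_nonneg_right (hdiv x) (sq_nonneg _)

theorem le_exp_mul_of_abs_deriv_le_mul {G G' : ℝ → ℝ} {C T : ℝ}
    (hG : ∀ t, HasDerivAt G (G' t) t) (hG_nonneg : ∀ t, 0 ≤ G t)
    (hG' : ∀ t ∈ Ico 0 T, |G' t| ≤ C * G t) :
    ∀ t ∈ Icc 0 T, G t ≤ Real.exp (C * t) * G 0 := by
  intro t ht
  have h := norm_le_gronwallBound_of_norm_deriv_right_le (ε := 0)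
    (fun s _ => (hG s).continuousAt.continuousWithinAt) (fun s _ => (hG s).hasDerivWithinAt)
    le_rfl (fun s hs => by simpa [Real.norm_of_nonneg (hG_nonneg s)] using hG' s hs) t ht
  simpa [Real.norm_of_nonneg (hG_nonneg _), gronwallBound_ε0, mul_comm] using h

theorem statement7_general (T C : ℝ)
    (v : ℝ × (Fin 3 → ℝ) → Fin 3 → ℝ) (f : ℝ × (Fin 3 → ℝ) → ℝ)
    (hv : ContDiff ℝ 1 v) (hf : ContDiff ℝ 1 f)
    (hdiv : ∀ t ∈ Set.Icc (0 : ℝ) T, ∀ x : Fin 3 → ℝ,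
      |∑ i : Fin 3, fderiv ℝ v (t, x) (0, Pi.single i 1) i| ≤ C)
    (K : Set (Fin 3 → ℝ)) (hK : IsCompact K)
    (hsupp : ∀ t ∈ Set.Icc (0 : ℝ) T, ∀ x ∉ K, f (t, x) = 0)
    (hpde : ∀ t ∈ Set.Icc (0 : ℝ) T, ∀ x : Fin 3 → ℝ,
      fderiv ℝ f (t, x) (1, 0)
        + v (t, x) ⬝ᵥ (fun i => fderiv ℝ f (t, x) (0, Pi.single i 1)) = 0) :
    (∀ t ∈ Set.Icc (0 : ℝ) T,
      (∫ x : Fin 3 → ℝ, f (t, x) ^ 2) ≤ Real.exp (C * t) * ∫ x : Fin 3 → ℝ, f (0, x) ^ 2) ∧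
    ((∀ x : Fin 3 → ℝ, f (0, x) = 0) →
      ∀ t ∈ Set.Icc (0 : ℝ) T, ∀ x : Fin 3 → ℝ, f (t, x) = 0) := by
  have hcs (t : ℝ) (ht : t ∈ Icc 0 T) : HasCompactSupport fun x => f (t, x) :=
    HasCompactSupport.intro hK (hsupp t ht)
  -- Integrating over the fixed compact `K` makes the energy differentiable at every `t`.
  have henergy (t : ℝ) (ht : t ∈ Icc 0 T) : ∫ x in K, f (t, x) ^ 2 = ∫ x, f (t, x) ^ 2 :=
    setIntegral_eq_integral_of_forall_compl_eq_zero fun x hx => by simp [hsupp t ht x hx]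
  have hderiv (t : ℝ) : HasDerivAt (fun s => ∫ x in K, f (s, x) ^ 2)
      (∫ x in K, 2 * f (t, x) * fderiv ℝ f (t, x) (1, 0)) t := by
    simpa only [fderiv_fun_sq_apply (hf.differentiable one_ne_zero _)] using
      hasDerivAt_setIntegral_of_contDiff (hf.pow 2) hK volume t
  have hgronwall := le_exp_mul_of_abs_deriv_le_mul hderiv
    (fun t => setIntegral_nonneg hK.measurableSet fun x _ => sq_nonneg (f (t, x)))
    fun t ht => by
      have ht' : t ∈ Icc 0 T := Ico_subset_Icc_self ht
      rw [henergy t ht', setIntegral_eq_integral_of_forall_compl_eq_zero fun x hx => by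
        simp [hsupp t ht' x hx]]
      exact abs_integral_mul_timeDeriv_le_of_transport hv hf (hdiv t ht') (hcs t ht') (hpde t ht')
  have hbound (t : ℝ) (ht : t ∈ Icc 0 T) :
      ∫ x, f (t, x) ^ 2 ≤ Real.exp (C * t) * ∫ x, f (0, x) ^ 2 := by
    rw [← henergy t ht, ← henergy 0 ⟨le_rfl, ht.1.trans ht.2⟩]
    exact hgronwall t ht
  refine ⟨hbound, fun h0 t ht x => by_contra fun hx => ?_⟩
  have hpos := Continuous.integral_pos_of_hasCompactSupport_nonneg_nonzero (μ := volume)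
    (by fun_prop) ((hcs t ht).comp_left (g := (· ^ 2)) (zero_pow two_ne_zero))
    (fun y => sq_nonneg (f (t, y))) (pow_ne_zero 2 hx)
  simpa [h0] using (hbound t ht).trans_lt' hpos

/-- Grönwall-type estimate for the transport equation
`∂_t f + v · ∇_x f = 0` on `[0,T] × ℝ³`: if the divergence `∇_x · v` is bounded by `C`
on `[0,T] × ℝ³` and `f(t,·)` is supported in a fixed compact set for `t ∈ [0,T]`, then
`∫ f(t,x)² dx ≤ e^{Ct} ∫ f(0,x)² dx` for `t ∈ [0,T]`; in particular `f(0,·) ≡ 0`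
forces `f(t,·) ≡ 0` on `[0,T]`. -/
theorem statement7 (T C : ℝ) (hT : 0 < T) (hC : 0 ≤ C)
    (v : ℝ × (Fin 3 → ℝ) → Fin 3 → ℝ) (f : ℝ × (Fin 3 → ℝ) → ℝ)
    (hv : ContDiff ℝ 1 v) (hf : ContDiff ℝ 1 f)
    (hdiv : ∀ t ∈ Set.Icc (0 : ℝ) T, ∀ x : Fin 3 → ℝ,
      |∑ i : Fin 3, fderiv ℝ v (t, x) (0, Pi.single i 1) i| ≤ C)
    (K : Set (Fin 3 → ℝ)) (hK : IsCompact K)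
    (hsupp : ∀ t ∈ Set.Icc (0 : ℝ) T, ∀ x ∉ K, f (t, x) = 0)
    (hpde : ∀ t ∈ Set.Icc (0 : ℝ) T, ∀ x : Fin 3 → ℝ,
      fderiv ℝ f (t, x) (1, 0)
        + v (t, x) ⬝ᵥ (fun i => fderiv ℝ f (t, x) (0, Pi.single i 1)) = 0) :
    (∀ t ∈ Set.Icc (0 : ℝ) T,
      (∫ x : Fin 3 → ℝ, f (t, x) ^ 2) ≤ Real.exp (C * t) * ∫ x : Fin 3 → ℝ, f (0, x) ^ 2) ∧
    ((∀ x : Fin 3 → ℝ, f (0, x) = 0) →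
      ∀ t ∈ Set.Icc (0 : ℝ) T, ∀ x : Fin 3 → ℝ, f (t, x) = 0) :=
  statement7_general T C v f hv hf hdiv K hK hsupp hpde
end

section
/- Let C > 0, K ≥ 0, T > 0, set Υ = 2 e^{C T} (K + C T) and suppose 0 < ε ≤ 1/((1 + C) Υ²). Let E : [0,T] → ℝ be continuously differentiable with E(t) ≥ 0 for all t ∈ [0,T], E(0) ≤ K, and E′(t) ≤ C E(t) + C ε E(t)² for all t ∈ [0,T]. Then E(t) ≤ Υ for every t ∈ [0,T]. -/
/-- the bootstrap/continuity argument.  Let `C > 0`, `K ≥ 0`, `T > 0`,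
`Υ = 2 e^{CT}(K + CT)`, and `0 < ε ≤ 1/((1+C)Υ²)`.  If `E` is continuously
differentiable on `[0,T]`, nonnegative there, `E(0) ≤ K`, and
`E′(t) ≤ C E(t) + C ε E(t)²` on `[0,T]`, then `E(t) ≤ Υ` on `[0,T]`. -/
theorem statement16 (C K T : ℝ) (hC : 0 < C) (hK : 0 ≤ K) (hT : 0 < T)
    (ε : ℝ) (hε : 0 < ε)
    (hε' : ε ≤ 1 / ((1 + C) * (2 * Real.exp (C * T) * (K + C * T)) ^ 2))
    (E E' : ℝ → ℝ)
    (hderiv : ∀ t ∈ Set.Icc (0 : ℝ) T, HasDerivAt E (E' t) t)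
    (hcont : ContinuousOn E' (Set.Icc (0 : ℝ) T))
    (hnonneg : ∀ t ∈ Set.Icc (0 : ℝ) T, 0 ≤ E t)
    (hinit : E 0 ≤ K)
    (hgrow : ∀ t ∈ Set.Icc (0 : ℝ) T, E' t ≤ C * E t + C * ε * E t ^ 2) :
    ∀ t ∈ Set.Icc (0 : ℝ) T, E t ≤ 2 * Real.exp (C * T) * (K + C * T) := by
  set Υ : ℝ := 2 * Real.exp (C * T) * (K + C * T) with hΥdef
  have hexp1 : (1 : ℝ) ≤ Real.exp (C * T) := by
    rw [Real.one_le_exp_iff]; positivity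
  have hΥpos : 0 < Υ := by
    have : 0 < K + C * T := by positivity
    positivity
  have hΥge : 2 * C * T ≤ Υ := by
    have h1 : 2 * C * T ≤ 2 * (K + C * T) := by nlinarith
    have h2 : 2 * (K + C * T) ≤ Υ := by nlinarith [mul_le_mul_of_nonneg_right hexp1 (by positivity : (0:ℝ) ≤ 2 * (K + C * T))]
    linarith
  -- from hε' : ε * (1+C) * Υ^2 ≤ 1
  have hε1 : ε * ((1 + C) * Υ ^ 2) ≤ 1 := by
    rw [le_div_iff₀ (by positivity)] at hε'
    linarith
  have hkey : C * ε * Υ * T ≤ 1 / 2 := by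
    nlinarith [mul_le_mul_of_nonneg_left hΥge (le_of_lt (mul_pos hε hΥpos)),
      sq_nonneg Υ, mul_pos hε hΥpos]
  -- continuity of E on [0,T]
  have hEc : ContinuousOn E (Set.Icc (0 : ℝ) T) := fun t ht =>
    (hderiv t ht).continuousAt.continuousWithinAt
  by_contra hcon
  push_neg at hcon
  obtain ⟨t₁, ht₁, ht₁'⟩ := hcon
  set A : Set ℝ := Set.Icc (0 : ℝ) T ∩ E ⁻¹' (Set.Ici Υ) with hAdef
  have hAne : A.Nonempty := ⟨t₁, ht₁, le_of_lt ht₁'⟩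
  have hAcl : IsClosed A := hEc.preimage_isClosed_of_isClosed isClosed_Icc isClosed_Ici
  have hAbdd : BddBelow A := ⟨0, fun x hx => hx.1.1⟩
  set t₀ : ℝ := sInf A with ht₀def
  have ht₀A : t₀ ∈ A := hAcl.csInf_mem hAne hAbdd
  have ht₀mem : t₀ ∈ Set.Icc (0 : ℝ) T := ht₀A.1
  have ht₀E : Υ ≤ E t₀ := ht₀A.2
  -- on [0, t₀), E ≤ Υ
  have hbelow : ∀ s ∈ Set.Ico (0 : ℝ) t₀, E s ≤ Υ := by
    intro s hs
    by_contra h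
    push_neg at h
    have hsA : s ∈ A := ⟨⟨hs.1, le_trans (le_of_lt hs.2) ht₀mem.2⟩, le_of_lt h⟩
    exact absurd (csInf_le hAbdd hsA) (not_le.mpr hs.2)
  have hsub : Set.Icc (0 : ℝ) t₀ ⊆ Set.Icc (0 : ℝ) T :=
    Set.Icc_subset_Icc le_rfl ht₀mem.2
  -- Gronwall on [0, t₀] with linear rate C' := C + C*ε*Υ
  set C' : ℝ := C + C * ε * Υ with hC'def
  have hgron := le_gronwallBound_of_liminf_deriv_right_le
    (f := E) (f' := E') (δ := K) (K := C') (ε := 0) (a := 0) (b := t₀)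
    (hEc.mono hsub)
    (fun x hx r hr => by
      have hx' : x ∈ Set.Icc (0 : ℝ) T := hsub (Set.Ico_subset_Icc_self hx)
      have := ((hderiv x hx').hasDerivWithinAt (s := Set.Ici x)).liminf_right_slope_le hr
      refine this.mono fun z hz => ?_
      rwa [slope_def_field, div_eq_inv_mul] at hz)
    hinit
    (fun x hx => by
      have hx' : x ∈ Set.Icc (0 : ℝ) T := hsub (Set.Ico_subset_Icc_self hx)
      have h1 := hgrow x hx'
      have h2 := hnonneg x hx'
      have h3 := hbelow x hx
      have hsq : E x ^ 2 ≤ Υ * E x := by nlinarith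
      have : C * ε * E x ^ 2 ≤ C * ε * Υ * E x := by
        have := mul_le_mul_of_nonneg_left hsq (by positivity : (0:ℝ) ≤ C * ε)
        nlinarith
      rw [add_zero]
      calc E' x ≤ C * E x + C * ε * E x ^ 2 := h1
        _ ≤ C * E x + C * ε * Υ * E x := by linarith
        _ = C' * E x := by ring)
  have hEt₀ := hgron t₀ (Set.right_mem_Icc.mpr ht₀mem.1)
  rw [sub_zero, gronwallBound_ε0] at hEt₀
  -- now show K * exp (C' * t₀) < Υ
  have hC't : C' * t₀ ≤ C * T + 1 / 2 := by
    have h1 : C * t₀ ≤ C * T := by nlinarith [ht₀mem.1, ht₀mem.2]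
    have h2 : C * ε * Υ * t₀ ≤ C * ε * Υ * T := by
      have : (0:ℝ) ≤ C * ε * Υ := by positivity
      nlinarith [ht₀mem.2]
    calc C' * t₀ = C * t₀ + C * ε * Υ * t₀ := by ring
      _ ≤ C * T + 1 / 2 := by linarith
  have hexphalf : Real.exp (1 / 2 : ℝ) < 2 := by
    have h : Real.exp (1 / 2 : ℝ) ^ 2 < 2 ^ 2 := by
      rw [sq, ← Real.exp_add]
      norm_num
      calc Real.exp 1 < 2.7182818286 := Real.exp_one_lt_d9
        _ < 4 := by norm_num
    exact lt_of_pow_lt_pow_left₀ 2 (by norm_num) h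
  have hfinal : K * Real.exp (C' * t₀) < Υ := by
    have h1 : Real.exp (C' * t₀) ≤ Real.exp (C * T) * Real.exp (1 / 2 : ℝ) := by
      rw [← Real.exp_add]
      exact Real.exp_le_exp.mpr hC't
    have h2 : K * Real.exp (C' * t₀) ≤ K * (Real.exp (C * T) * 2) := by
      have ha := mul_le_mul_of_nonneg_left h1 hK
      have hc := mul_le_mul_of_nonneg_left
        (mul_le_mul_of_nonneg_left hexphalf.le
          (by positivity : (0:ℝ) ≤ Real.exp (C * T))) hK
      linarith
    have h3 : K * (Real.exp (C * T) * 2) < Υ := by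
      have : 0 < C * T := by positivity
      nlinarith [Real.exp_pos (C * T)]
    linarith
  linarith
end
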